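/- Let ψ : [0,∞) → [0,∞) be non-decreasing and left-continuous, n ≥ 1, α ∈ (0,n). Suppose ρ > α/(n − α) and ψ(t) ≤ c t^ρ for all t > 0 and some c > 0. Then there exists a constant C > 0 such that for every f ∈ L¹(ℝⁿ), sup_{t > 0} t^{(nρ − α(ρ+1))/n} (W_{α,ψ} f)*(t) ≤ C ‖f‖_{L¹(ℝⁿ)}^ρ; in particular W_{α,ψ} maps L¹(ℝⁿ) into the Marcinkiewicz space Λ^{n/(nρ − α(ρ+1)), ∞}(ℝⁿ). -/

import Mathlib

open MeasureTheory Set ENNReal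

noncomputable section

/-- The generalized Wolff potential
`W_{α,ψ} f(x) = ∫₀^∞ r^{α−1} ψ(r^{α−n} ∫_{B(x,r)} |f(y)| dy) dr`. -/
def wolffE {n : ℕ} (α : ℝ) (ψ : ℝ → ℝ) (f : EuclideanSpace ℝ (Fin n) → ℝ)
    (x : EuclideanSpace ℝ (Fin n)) : ℝ≥0∞ :=
  ∫⁻ r in Ioi (0 : ℝ),
    ENNReal.ofReal (r ^ (α - 1) * ψ (r ^ (α - n) * ∫ y in Metric.ball x r, |f y|))

/-- Decreasing rearrangement of an `ℝ≥0∞`-valued function. -/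
def rearrE {n : ℕ} (u : EuclideanSpace ℝ (Fin n) → ℝ≥0∞) (t : ℝ) : ℝ≥0∞ :=
  sSup {s : ℝ≥0∞ | ENNReal.ofReal t < volume {x | s < u x}}

lemma weakMax (n : ℕ) (f : EuclideanSpace ℝ (Fin n) → ℝ) (s R : ℝ) :
    ENNReal.ofReal s * volume {x : EuclideanSpace ℝ (Fin n) |
        ∃ r ∈ Ioc (0:ℝ) R, ENNReal.ofReal s * volume (Metric.closedBall x r)
          ≤ ∫⁻ y in Metric.closedBall x r, ‖f y‖₊} ≤
      ENNReal.ofReal ((4:ℝ)^n) * ∫⁻ y, ‖f y‖₊ := by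
  classical
  set S := {x : EuclideanSpace ℝ (Fin n) |
      ∃ r ∈ Ioc (0:ℝ) R, ENNReal.ofReal s * volume (Metric.closedBall x r)
        ≤ ∫⁻ y in Metric.closedBall x r, ‖f y‖₊} with hS
  set rad : EuclideanSpace ℝ (Fin n) → ℝ := fun x =>
    if h : x ∈ S then h.choose else 0 with hrad
  have hradmem : ∀ x ∈ S, rad x ∈ Ioc (0:ℝ) R ∧
      ENNReal.ofReal s * volume (Metric.closedBall x (rad x))
        ≤ ∫⁻ y in Metric.closedBall x (rad x), ‖f y‖₊ := by
    intro x hx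
    have h := hx.choose_spec
    simp only [hrad, dif_pos hx]
    exact h
  obtain ⟨u, huS, hdisj, hcov⟩ :=
    Vitali.exists_disjoint_subfamily_covering_enlargement_closedBall S id rad R
      (fun a ha => (hradmem a ha).1.2) 4 (by norm_num)
  have hucnt : u.Countable := by
    apply hdisj.countable_of_nonempty_interior
    intro b hb
    have h0 : 0 < rad b := (hradmem b (huS hb)).1.1
    refine ⟨b, ?_⟩
    rw [interior_closedBall _ h0.ne']
    exact Metric.mem_ball_self h0
  haveI := hucnt.to_subtype
  have hcover : S ⊆ ⋃ b ∈ u, Metric.closedBall b (4 * rad b) := by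
    intro a ha
    obtain ⟨b, hbu, hsub⟩ := hcov a ha
    exact mem_biUnion hbu (hsub (Metric.mem_closedBall_self (hradmem a ha).1.1.le))
  calc ENNReal.ofReal s * volume S
      ≤ ENNReal.ofReal s * ∑' b : u, volume (Metric.closedBall b.1 (4 * rad b)) := by
        gcongr
        exact (measure_mono hcover).trans (by
          rw [biUnion_eq_iUnion]; exact measure_iUnion_le _)
    _ = ENNReal.ofReal s * ∑' b : u, ENNReal.ofReal ((4:ℝ)^n) * volume (Metric.closedBall b.1 (rad b)) := by
        congr 1
        apply tsum_congr
        intro b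
        have h0 : 0 ≤ rad b.1 := (hradmem b (huS b.2)).1.1.le
        rw [Measure.addHaar_closedBall _ _ (by positivity), Measure.addHaar_closedBall _ _ h0,
          finrank_euclideanSpace_fin, mul_pow, ENNReal.ofReal_mul (by positivity), mul_assoc]
    _ = ENNReal.ofReal ((4:ℝ)^n) * ∑' b : u, ENNReal.ofReal s * volume (Metric.closedBall b.1 (rad b)) := by
        rw [ENNReal.tsum_mul_left, ENNReal.tsum_mul_left, ← mul_assoc, ← mul_assoc,
          mul_comm (ENNReal.ofReal s)]
    _ ≤ ENNReal.ofReal ((4:ℝ)^n) * ∑' b : u, ∫⁻ y in Metric.closedBall b.1 (rad b), ‖f y‖₊ := by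
        gcongr with b
        exact (hradmem b (huS b.2)).2
    _ = ENNReal.ofReal ((4:ℝ)^n) * ∫⁻ y in ⋃ b : u, Metric.closedBall b.1 (rad b), ‖f y‖₊ := by
        congr 1
        exact (lintegral_iUnion (fun b : u => measurableSet_closedBall)
          (hdisj.subtype _ _) fun y => ‖f y‖₊).symm
    _ ≤ ENNReal.ofReal ((4:ℝ)^n) * ∫⁻ y, ‖f y‖₊ := by
        gcongr
        exact Measure.restrict_le_self

def kap (n : ℕ) : ℝ := (volume (Metric.ball (0 : EuclideanSpace ℝ (Fin n)) 1)).toReal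

lemma kap_pos (n : ℕ) : 0 < kap n :=
  ENNReal.toReal_pos (Metric.measure_ball_pos _ _ one_pos).ne' measure_ball_lt_top.ne

lemma vol_cb (n : ℕ) (x : EuclideanSpace ℝ (Fin n)) {r : ℝ} (hr : 0 ≤ r) :
    volume (Metric.closedBall x r) = ENNReal.ofReal (r ^ (n:ℝ) * kap n) := by
  rw [Measure.addHaar_closedBall _ _ hr, finrank_euclideanSpace_fin,
    ENNReal.ofReal_mul (by positivity), ← Real.rpow_natCast r n]
  congr 1
  rw [kap, ENNReal.ofReal_toReal measure_ball_lt_top.ne]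

lemma cb_lint (n : ℕ) (f : EuclideanSpace ℝ (Fin n) → ℝ) (hf : Integrable f)
    (s : Set (EuclideanSpace ℝ (Fin n))) :
    ENNReal.ofReal (∫ y in s, |f y|) = ∫⁻ y in s, ‖f y‖₊ := by
  rw [ofReal_integral_eq_lintegral_ofReal hf.abs.integrableOn
    (ae_of_all _ fun y => abs_nonneg _)]
  simp_rw [← Real.enorm_eq_ofReal_abs]
  rfl

lemma wolff_pointwise (n : ℕ) (α : ℝ) (hα0 : 0 < α) (hαn : α < n)
    (ψ : ℝ → ℝ) (hψmono : MonotoneOn ψ (Ici 0))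
    (ρ : ℝ) (hρ0 : 0 < ρ) (hβ : α < (n - α) * ρ)
    (c : ℝ) (hc : 0 < c) (hψ' : ∀ u : ℝ, 0 ≤ u → ψ u ≤ c * u ^ ρ)
    (f : EuclideanSpace ℝ (Fin n) → ℝ) (hf : Integrable f) (s R : ℝ) (hs : 0 < s) (hR : 0 < R)
    (x : EuclideanSpace ℝ (Fin n))
    (hx : ∀ r ∈ Ioc (0:ℝ) R, (∫⁻ y in Metric.closedBall x r, ‖f y‖₊)
      < ENNReal.ofReal s * volume (Metric.closedBall x r)) :
    wolffE α ψ f x ≤ ENNReal.ofReal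
      (c * (s * kap n) ^ ρ * (R ^ (α * (1 + ρ)) / (α * (1 + ρ)))
        + c * (∫ y, |f y|) ^ ρ * (R ^ (α - (n - α) * ρ) / ((n - α) * ρ - α))) := by
  set A := ∫ y, |f y| with hA
  have hA0 : 0 ≤ A := integral_nonneg fun y => abs_nonneg _
  have hδ : 0 < α * (1 + ρ) := by positivity
  set δ := α * (1 + ρ) with hδdef
  set β := α - (n - α) * ρ with hβdef
  have hβneg : β < 0 := by simp only [hβdef]; linarith
  -- bounds on the ball averages
  have hm0 : ∀ r : ℝ, 0 ≤ ∫ y in Metric.ball x r, |f y| :=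
    fun r => integral_nonneg fun y => abs_nonneg _
  have hmA : ∀ r : ℝ, (∫ y in Metric.ball x r, |f y|) ≤ A :=
    fun r => setIntegral_le_integral hf.abs (ae_of_all _ fun y => abs_nonneg _)
  have hmS : ∀ r ∈ Ioc (0:ℝ) R, (∫ y in Metric.ball x r, |f y|) ≤ s * (r ^ (n:ℝ) * kap n) := by
    intro r hr
    have h1 : (∫ y in Metric.ball x r, |f y|) ≤ ∫ y in Metric.closedBall x r, |f y| :=
      setIntegral_mono_set hf.abs.integrableOn (ae_of_all _ fun y => abs_nonneg _)
        (ae_of_all _ Metric.ball_subset_closedBall)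
    have h2 : ENNReal.ofReal (∫ y in Metric.closedBall x r, |f y|) ≤
        ENNReal.ofReal (s * (r ^ (n:ℝ) * kap n)) := by
      rw [cb_lint n f hf]
      refine le_trans (hx r hr).le ?_
      rw [vol_cb n x hr.1.le, ← ENNReal.ofReal_mul hs.le]
    exact h1.trans ((ENNReal.ofReal_le_ofReal_iff (mul_nonneg hs.le
      (mul_nonneg (Real.rpow_nonneg hr.1.le _) (kap_pos n).le))).mp h2)
  -- split the integral
  have hsplit : wolffE α ψ f x =
      (∫⁻ r in Ioc (0:ℝ) R, ENNReal.ofReal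
        (r ^ (α - 1) * ψ (r ^ (α - n) * ∫ y in Metric.ball x r, |f y|)))
      + ∫⁻ r in Ioi R, ENNReal.ofReal
        (r ^ (α - 1) * ψ (r ^ (α - n) * ∫ y in Metric.ball x r, |f y|)) := by
    rw [wolffE, ← Ioc_union_Ioi_eq_Ioi hR.le, lintegral_union measurableSet_Ioi
      Ioc_disjoint_Ioi_same]
  have hk : (0:ℝ) ≤ s * kap n := mul_nonneg hs.le (kap_pos n).le
  have hden : (0:ℝ) < (n - α) * ρ - α := by linarith
  rw [hsplit, ENNReal.ofReal_add
    (mul_nonneg (mul_nonneg hc.le (Real.rpow_nonneg hk _))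
      (div_nonneg (Real.rpow_nonneg hR.le _) hδ.le))
    (mul_nonneg (mul_nonneg hc.le (Real.rpow_nonneg hA0 _))
      (div_nonneg (Real.rpow_nonneg hR.le _) hden.le))]
  gcongr
  -- near part
  · have hb : ∀ r ∈ Ioc (0:ℝ) R, ENNReal.ofReal
        (r ^ (α - 1) * ψ (r ^ (α - n) * ∫ y in Metric.ball x r, |f y|)) ≤
        ENNReal.ofReal (c * (s * kap n) ^ ρ * r ^ (δ - 1)) := by
      intro r hr
      have hr0 : (0:ℝ) < r := hr.1
      apply ENNReal.ofReal_le_ofReal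
      have harg : r ^ (α - n) * (∫ y in Metric.ball x r, |f y|) ≤ s * kap n * r ^ α := by
        calc r ^ (α - n) * (∫ y in Metric.ball x r, |f y|)
            ≤ r ^ (α - n) * (s * (r ^ (n:ℝ) * kap n)) := by
              apply mul_le_mul_of_nonneg_left (hmS r hr) (Real.rpow_nonneg hr0.le _)
          _ = s * kap n * (r ^ (α - n) * r ^ (n:ℝ)) := by ring
          _ = s * kap n * r ^ α := by
              rw [← Real.rpow_add hr0]; norm_num
      have hψb : ψ (r ^ (α - n) * ∫ y in Metric.ball x r, |f y|) ≤
          c * (s * kap n) ^ ρ * r ^ (α * ρ) := by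
        calc ψ (r ^ (α - n) * ∫ y in Metric.ball x r, |f y|)
            ≤ c * (r ^ (α - n) * ∫ y in Metric.ball x r, |f y|) ^ ρ :=
              hψ' _ (mul_nonneg (Real.rpow_nonneg hr0.le _) (hm0 r))
          _ ≤ c * (s * kap n * r ^ α) ^ ρ := by
              apply mul_le_mul_of_nonneg_left _ hc.le
              exact Real.rpow_le_rpow (mul_nonneg (Real.rpow_nonneg hr0.le _) (hm0 r))
                harg hρ0.le
          _ = c * (s * kap n) ^ ρ * r ^ (α * ρ) := by
              rw [Real.mul_rpow (by positivity) (Real.rpow_nonneg hr0.le _),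
                ← Real.rpow_mul hr0.le, mul_assoc]
      calc r ^ (α - 1) * ψ (r ^ (α - n) * ∫ y in Metric.ball x r, |f y|)
          ≤ r ^ (α - 1) * (c * (s * kap n) ^ ρ * r ^ (α * ρ)) :=
            mul_le_mul_of_nonneg_left hψb (Real.rpow_nonneg hr0.le _)
        _ = c * (s * kap n) ^ ρ * r ^ (δ - 1) := by
            rw [show δ - 1 = (α - 1) + α * ρ by rw [hδdef]; ring, Real.rpow_add hr0]; ring
    calc (∫⁻ r in Ioc (0:ℝ) R, ENNReal.ofReal
          (r ^ (α - 1) * ψ (r ^ (α - n) * ∫ y in Metric.ball x r, |f y|)))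
        ≤ ∫⁻ r in Ioc (0:ℝ) R, ENNReal.ofReal (c * (s * kap n) ^ ρ * r ^ (δ - 1)) :=
          setLIntegral_mono' measurableSet_Ioc hb
      _ = ENNReal.ofReal (∫ r in Ioc (0:ℝ) R, c * (s * kap n) ^ ρ * r ^ (δ - 1)) := by
          rw [ofReal_integral_eq_lintegral_ofReal]
          · exact (intervalIntegrable_iff_integrableOn_Ioc_of_le hR.le).1
              ((intervalIntegral.intervalIntegrable_rpow'
                (by linarith : (-1:ℝ) < δ - 1)).const_mul _)
          · exact (ae_restrict_iff' measurableSet_Ioc).2 (ae_of_all _ fun r hr =>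
              mul_nonneg (mul_nonneg hc.le (Real.rpow_nonneg hk _))
                (Real.rpow_nonneg hr.1.le _))
      _ ≤ ENNReal.ofReal (c * (s * kap n) ^ ρ * (R ^ δ / δ)) := by
          apply ENNReal.ofReal_le_ofReal
          rw [integral_const_mul, ← intervalIntegral.integral_of_le hR.le,
            integral_rpow (Or.inl (by linarith : (-1:ℝ) < δ - 1))]
          rw [show δ - 1 + 1 = δ by ring, Real.zero_rpow hδ.ne', sub_zero]
  -- tail part
  · have hb : ∀ r ∈ Ioi R, ENNReal.ofReal
        (r ^ (α - 1) * ψ (r ^ (α - n) * ∫ y in Metric.ball x r, |f y|)) ≤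
        ENNReal.ofReal (c * A ^ ρ * r ^ (β - 1)) := by
      intro r hr
      have hr0 : (0:ℝ) < r := hR.trans hr
      apply ENNReal.ofReal_le_ofReal
      have hψb : ψ (r ^ (α - n) * ∫ y in Metric.ball x r, |f y|) ≤
          c * A ^ ρ * r ^ ((α - n) * ρ) := by
        calc ψ (r ^ (α - n) * ∫ y in Metric.ball x r, |f y|)
            ≤ c * (r ^ (α - n) * ∫ y in Metric.ball x r, |f y|) ^ ρ :=
              hψ' _ (mul_nonneg (Real.rpow_nonneg hr0.le _) (hm0 r))
          _ ≤ c * (r ^ (α - n) * A) ^ ρ := by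
              apply mul_le_mul_of_nonneg_left _ hc.le
              exact Real.rpow_le_rpow (mul_nonneg (Real.rpow_nonneg hr0.le _) (hm0 r))
                (mul_le_mul_of_nonneg_left (hmA r) (Real.rpow_nonneg hr0.le _)) hρ0.le
          _ = c * A ^ ρ * r ^ ((α - n) * ρ) := by
              rw [Real.mul_rpow (Real.rpow_nonneg hr0.le _) hA0,
                ← Real.rpow_mul hr0.le]; ring
      calc r ^ (α - 1) * ψ (r ^ (α - n) * ∫ y in Metric.ball x r, |f y|)
          ≤ r ^ (α - 1) * (c * A ^ ρ * r ^ ((α - n) * ρ)) :=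
            mul_le_mul_of_nonneg_left hψb (Real.rpow_nonneg hr0.le _)
        _ = c * A ^ ρ * r ^ (β - 1) := by
            rw [show β - 1 = (α - 1) + (α - n) * ρ by rw [hβdef]; ring,
              Real.rpow_add hr0]; ring
    calc (∫⁻ r in Ioi R, ENNReal.ofReal
          (r ^ (α - 1) * ψ (r ^ (α - n) * ∫ y in Metric.ball x r, |f y|)))
        ≤ ∫⁻ r in Ioi R, ENNReal.ofReal (c * A ^ ρ * r ^ (β - 1)) :=
          setLIntegral_mono' measurableSet_Ioi hb
      _ = ENNReal.ofReal (∫ r in Ioi R, c * A ^ ρ * r ^ (β - 1)) := by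
          rw [ofReal_integral_eq_lintegral_ofReal]
          · exact (integrableOn_Ioi_rpow_of_lt (by linarith : β - 1 < -1) hR).const_mul _
          · exact (ae_restrict_iff' measurableSet_Ioi).2 (ae_of_all _ fun r hr =>
              mul_nonneg (mul_nonneg hc.le (Real.rpow_nonneg hA0 _))
                (Real.rpow_nonneg (hR.trans hr).le _))
      _ ≤ ENNReal.ofReal (c * A ^ ρ * (R ^ β / ((n - α) * ρ - α))) := by
          apply ENNReal.ofReal_le_ofReal
          rw [integral_const_mul, integral_Ioi_rpow_of_lt
            (by linarith : β - 1 < -1) hR]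
          rw [show β - 1 + 1 = β by ring,
            show -R ^ β / β = R ^ β / ((↑n - α) * ρ - α) by
              rw [show ((n:ℝ) - α) * ρ - α = -β by rw [hβdef]; ring, div_neg, neg_div]]

/-- `W_{α,ψ}` maps `L¹(ℝⁿ)` into the Marcinkiewicz space
`Λ^{n/(nρ − α(ρ+1)), ∞}(ℝⁿ)` when `ψ(t) ≤ c t^ρ` with `ρ > α/(n−α)`:
`sup_{t>0} t^{(nρ − α(ρ+1))/n} (W_{α,ψ} f)*(t) ≤ C ‖f‖_{L¹}^ρ`. -/
theorem statement11 (n : ℕ) (hn : 1 ≤ n) (α : ℝ) (hα : α ∈ Ioo (0 : ℝ) n)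
    (ψ : ℝ → ℝ) (hψmono : MonotoneOn ψ (Ici 0))
    (hψnonneg : ∀ s ∈ Ici (0 : ℝ), 0 ≤ ψ s)
    (hψlc : ∀ s : ℝ, 0 < s → ContinuousWithinAt ψ (Iio s) s)
    (ρ : ℝ) (hρ : α / (n - α) < ρ)
    (c : ℝ) (hc : 0 < c) (hψρ : ∀ t : ℝ, 0 < t → ψ t ≤ c * t ^ ρ) :
    ∃ C : ℝ, 0 < C ∧
      ∀ f : EuclideanSpace ℝ (Fin n) → ℝ, Integrable f →
        ∀ t : ℝ, 0 < t →
          ENNReal.ofReal (t ^ ((n * ρ - α * (ρ + 1)) / n)) * rearrE (wolffE α ψ f) t ≤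
            ENNReal.ofReal (C * (∫ x, |f x|) ^ ρ) := by
  obtain ⟨hα0, hαn⟩ := hα
  have hn0 : (0:ℝ) < n := by exact_mod_cast Nat.lt_of_lt_of_le Nat.zero_lt_one hn
  have hnα : (0:ℝ) < (n:ℝ) - α := by linarith
  have hρ0 : (0:ℝ) < ρ := (div_pos hα0 hnα).trans hρ
  have hβ : α < ((n:ℝ) - α) * ρ := by
    rw [div_lt_iff₀ hnα] at hρ; linarith
  have hδ : (0:ℝ) < α * (1 + ρ) := mul_pos hα0 (by linarith)
  have hden : (0:ℝ) < ((n:ℝ) - α) * ρ - α := by linarith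
  -- ψ vanishes at 0 and satisfies the bound on all of [0,∞)
  have hψ0 : ψ 0 = 0 := by
    have key : ∀ ε : ℝ, 0 < ε → ψ 0 ≤ ε := by
      intro ε hε
      have hτ : 0 < (ε / c) ^ (1 / ρ) := Real.rpow_pos_of_pos (div_pos hε hc) _
      calc ψ 0 ≤ ψ ((ε / c) ^ (1 / ρ)) := hψmono self_mem_Ici (mem_Ici.2 hτ.le) hτ.le
        _ ≤ c * ((ε / c) ^ (1 / ρ)) ^ ρ := hψρ _ hτ
        _ = ε := by
            rw [← Real.rpow_mul (div_nonneg hε.le hc.le), one_div_mul_cancel hρ0.ne',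
              Real.rpow_one, mul_div_cancel₀ _ hc.ne']
    refine le_antisymm ?_ (hψnonneg 0 self_mem_Ici)
    by_contra h
    push_neg at h
    linarith [key (ψ 0 / 2) (by linarith)]
  have hψ' : ∀ u : ℝ, 0 ≤ u → ψ u ≤ c * u ^ ρ := by
    intro u hu
    rcases hu.eq_or_lt with h | h
    · rw [← h, hψ0, Real.zero_rpow hρ0.ne', mul_zero]
    · exact hψρ u h
  set C₁ := c * (kap n) ^ ρ * ((4:ℝ)^n) ^ ρ / (α * (1 + ρ)) with hC₁
  set C₂ := c / (((n:ℝ) - α) * ρ - α) with hC₂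
  have hC₁pos : 0 < C₁ := div_pos (mul_pos (mul_pos hc
    (Real.rpow_pos_of_pos (kap_pos n) _)) (Real.rpow_pos_of_pos (by positivity) _)) hδ
  have hC₂pos : 0 < C₂ := div_pos hc hden
  refine ⟨C₁ + C₂, by linarith, ?_⟩
  intro f hf t ht
  set A := ∫ x, |f x| with hAdef
  have hA0 : 0 ≤ A := integral_nonneg fun x => abs_nonneg _
  rcases hA0.eq_or_lt with hA | hA
  · -- trivial case ‖f‖₁ = 0
    have hf0 : (fun x => |f x|) =ᵐ[volume] 0 :=
      (integral_eq_zero_iff_of_nonneg (fun x => abs_nonneg _) hf.abs).mp hA.symm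
    have hw : ∀ x, wolffE α ψ f x = 0 := by
      intro x
      have hzero : ∀ r : ℝ, (∫ y in Metric.ball x r, |f y|) = 0 := fun r =>
        integral_eq_zero_of_ae (ae_restrict_of_ae hf0)
      have hz : ∀ r : ℝ, ENNReal.ofReal
          (r ^ (α - 1) * ψ (r ^ (α - n) * ∫ y in Metric.ball x r, |f y|)) = 0 := by
        intro r
        rw [hzero r, mul_zero, hψ0, mul_zero, ENNReal.ofReal_zero]
      rw [wolffE]
      simp [hz]
    have hre : rearrE (wolffE α ψ f) t = 0 := by
      have hempty : {s : ℝ≥0∞ | ENNReal.ofReal t < volume {x | s < wolffE α ψ f x}} = ∅ := by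
        ext b
        simp only [mem_setOf_eq, mem_empty_iff_false, iff_false, not_lt]
        have h1 : {x | b < wolffE α ψ f x} = ∅ := by
          ext x
          simp [hw x]
        rw [h1, measure_empty]
        exact zero_le
      rw [rearrE, hempty, sSup_empty]
      rfl
    rw [hre, mul_zero]
    exact zero_le
  · set s := (4:ℝ)^n * A / t with hsdef
    have hs : 0 < s := div_pos (mul_pos (by positivity) hA) ht
    set R := t ^ (1 / (n:ℝ)) with hRdef
    have hR : 0 < R := Real.rpow_pos_of_pos ht _
    set S := {x : EuclideanSpace ℝ (Fin n) |
        ∃ r ∈ Ioc (0:ℝ) R, ENNReal.ofReal s * volume (Metric.closedBall x r)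
          ≤ ∫⁻ y in Metric.closedBall x r, ‖f y‖₊} with hSdef
    have hSvol : volume S ≤ ENNReal.ofReal t := by
      have h1 := weakMax n f s R
      have h2 : (∫⁻ y, (‖f y‖₊ : ℝ≥0∞)) = ENNReal.ofReal A := by
        simp only [← enorm_eq_nnnorm]
        rw [← ofReal_integral_norm_eq_lintegral_enorm hf]
        congr 1
      rw [h2, ← ENNReal.ofReal_mul (by positivity),
        show (4:ℝ)^n * A = s * t by rw [hsdef]; field_simp,
        ENNReal.ofReal_mul hs.le] at h1
      exact (ENNReal.mul_le_mul_iff_right (ENNReal.ofReal_pos.2 hs).ne' ENNReal.ofReal_ne_top).mp h1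
    set G := c * (s * kap n) ^ ρ * (R ^ (α * (1 + ρ)) / (α * (1 + ρ)))
        + c * A ^ ρ * (R ^ (α - ((n:ℝ) - α) * ρ) / (((n:ℝ) - α) * ρ - α)) with hGdef
    have hpoint : ∀ x, x ∉ S → wolffE α ψ f x ≤ ENNReal.ofReal G := by
      intro x hx
      exact wolff_pointwise n α hα0 hαn ψ hψmono ρ hρ0 hβ c hc hψ' f hf s R hs hR x
        (fun r hr => lt_of_not_ge (fun hle => hx ⟨r, hr, hle⟩))
    have hrearr : rearrE (wolffE α ψ f) t ≤ ENNReal.ofReal G := by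
      rw [rearrE]
      apply sSup_le
      intro b hb
      by_contra hcon
      push_neg at hcon
      have hsub : {x | b < wolffE α ψ f x} ⊆ S := by
        intro x hxx
        by_contra hxS
        exact absurd ((hcon.trans hxx).trans_le (hpoint x hxS)) (lt_irrefl _)
      exact absurd (hb.trans_le ((measure_mono hsub).trans hSvol)) (lt_irrefl _)
    have halg : t ^ (((n:ℝ) * ρ - α * (ρ + 1)) / n) * G = (C₁ + C₂) * A ^ ρ := by
      set γ := ((n:ℝ) * ρ - α * (ρ + 1)) / n with hγ
      have e1 : (s * kap n) ^ ρ = ((4:ℝ)^n) ^ ρ * A ^ ρ * (kap n) ^ ρ * (t ^ ρ)⁻¹ := by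
        rw [hsdef, show (4:ℝ)^n * A / t * kap n = (4:ℝ)^n * (A * kap n) * t⁻¹ by ring,
          Real.mul_rpow (mul_nonneg (by positivity) (mul_nonneg hA0 (kap_pos n).le))
            (inv_nonneg.2 ht.le),
          Real.mul_rpow (by positivity) (mul_nonneg hA0 (kap_pos n).le),
          Real.mul_rpow hA0 (kap_pos n).le, Real.inv_rpow ht.le]
        ring
      have e2 : R ^ (α * (1 + ρ)) = t ^ ((1/(n:ℝ)) * (α * (1 + ρ))) := by
        rw [hRdef, Real.rpow_mul ht.le]
      have e3 : R ^ (α - ((n:ℝ) - α) * ρ) = t ^ ((1/(n:ℝ)) * (α - ((n:ℝ) - α) * ρ)) := by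
        rw [hRdef, Real.rpow_mul ht.le]
      have e4 : t ^ γ * t ^ ((1/(n:ℝ)) * (α * (1 + ρ))) * (t ^ ρ)⁻¹ = 1 := by
        rw [← Real.rpow_neg ht.le, ← Real.rpow_add ht, ← Real.rpow_add ht,
          show γ + (1/(n:ℝ)) * (α * (1 + ρ)) + -ρ = 0 by
            rw [hγ]; field_simp; ring]
        exact Real.rpow_zero t
      have e5 : t ^ γ * t ^ ((1/(n:ℝ)) * (α - ((n:ℝ) - α) * ρ)) = 1 := by
        rw [← Real.rpow_add ht,
          show γ + (1/(n:ℝ)) * (α - ((n:ℝ) - α) * ρ) = 0 by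
            rw [hγ]; field_simp; ring]
        exact Real.rpow_zero t
      calc t ^ γ * G
          = (c * (kap n) ^ ρ * ((4:ℝ)^n) ^ ρ / (α * (1 + ρ))) * A ^ ρ *
              (t ^ γ * t ^ ((1/(n:ℝ)) * (α * (1 + ρ))) * (t ^ ρ)⁻¹)
            + (c / (((n:ℝ) - α) * ρ - α)) * A ^ ρ *
              (t ^ γ * t ^ ((1/(n:ℝ)) * (α - ((n:ℝ) - α) * ρ))) := by
            rw [hGdef, e1, e2, e3]; ring
        _ = (C₁ + C₂) * A ^ ρ := by rw [e4, e5, hC₁, hC₂]; ring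
    calc ENNReal.ofReal (t ^ (((n:ℝ) * ρ - α * (ρ + 1)) / n)) * rearrE (wolffE α ψ f) t
        ≤ ENNReal.ofReal (t ^ (((n:ℝ) * ρ - α * (ρ + 1)) / n)) * ENNReal.ofReal G :=
          mul_le_mul_right hrearr _
      _ = ENNReal.ofReal (t ^ (((n:ℝ) * ρ - α * (ρ + 1)) / n) * G) :=
          (ENNReal.ofReal_mul (Real.rpow_nonneg ht.le _)).symm
      _ = ENNReal.ofReal ((C₁ + C₂) * A ^ ρ) := by rw [halg]
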